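/- Let X ⊂ ℝ^M be compact and let f : X → X be Borel measurable with invariant Borel probability measure μ whose Radon–Nikodym derivative with respect to Lebesgue measure on ℝ^M is continuous. Let (ε_m)_{m≥1} be a sequence of positive numbers converging to zero, and suppose there exists a sequence of countable measurable partitions (𝒯_m)_{m≥1} of X such that every T ∈ 𝒯_m has diameter less than ε_m and for every measurable set E ⊆ X and every T ∈ 𝒯_m one has |μ(E)·μ(T) − μ(f^{−m}(E) ∩ T)| < ε_m·μ(T). Then there exists a constant C > 0 such that for every m ≥ 1, sup_{s∈ℝ} |F_m(s) − F(s)| < C·ε_m. -/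

import Mathlib

open MeasureTheory Set Filter

private lemma pow_sub_pow_le_aux {a b : ℝ} (hb : 0 ≤ b) (hab : b ≤ a) :
    ∀ n : ℕ, a ^ (n + 1) - b ^ (n + 1) ≤ (n + 1) * a ^ n * (a - b) := by
  intro n
  induction n with
  | zero => simp
  | succ n ih =>
    have ha : 0 ≤ a := hb.trans hab
    have h1 : b ^ (n+1) ≤ a ^ (n+1) := pow_le_pow_left₀ hb hab _
    have h2 : 0 ≤ a ^ (n+1) := pow_nonneg ha _
    have h3 : 0 ≤ a ^ n := pow_nonneg ha _
    calc a ^ (n+2) - b ^ (n+2) = a * (a ^ (n+1) - b ^ (n+1)) + (a - b) * b ^ (n+1) := by ring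
      _ ≤ a * ((n+1) * a ^ n * (a-b)) + (a-b) * a ^ (n+1) := by
          have := mul_le_mul_of_nonneg_left ih ha
          nlinarith [mul_le_mul_of_nonneg_left h1 (sub_nonneg.2 hab)]
      _ = ((n:ℝ)+1+1) * a ^ (n+1) * (a - b) := by ring
      _ = ((n+1:ℕ):ℝ) * a ^ (n+1) * (a-b) + a ^ (n+1) * (a-b) := by push_cast; ring
      _ ≤ _ := by push_cast; ring_nf; exact le_rfl

private lemma cdf_aux_ann (M : ℕ) (hM : 0 < M)
    (X : Set (EuclideanSpace ℝ (Fin M)))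
    (μ : Measure (EuclideanSpace ℝ (Fin M))) [IsProbabilityMeasure μ]
    (G D L : ℝ) (hG : 0 ≤ G) (hD : 0 ≤ D)
    (hLdef : L = G * (volume (Metric.ball (0 : EuclideanSpace ℝ (Fin M)) 1)).toReal
      * M * (D + 2) ^ (M - 1))
    (hdistD : ∀ x ∈ X, ∀ y ∈ X, dist x y ≤ D)
    (hμle : ∀ S : Set (EuclideanSpace ℝ (Fin M)), MeasurableSet S →
      μ S ≤ ENNReal.ofReal G * volume (S ∩ X)) :
    ∀ y ∈ X, ∀ s δ : ℝ, 0 < δ → δ ≤ 2 →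
      μ {x | s ≤ dist x y ∧ dist x y < s + δ} ≤ ENNReal.ofReal (L * δ) := by
  set ν := volume (Metric.ball (0 : EuclideanSpace ℝ (Fin M)) 1) with hνdef
  have hνfin : ν ≠ ⊤ := measure_ball_lt_top.ne
  set K := ν.toReal with hKdef
  have hK : 0 ≤ K := ENNReal.toReal_nonneg
  have hL : 0 ≤ L := by rw [hLdef]; positivity
  have hfrk : Module.finrank ℝ (EuclideanSpace ℝ (Fin M)) = M := by
    simp [finrank_euclideanSpace]
  have hball : ∀ (y : EuclideanSpace ℝ (Fin M)) (r : ℝ), 0 < r →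
      volume (Metric.ball y r) = ENNReal.ofReal (r ^ M) * ν := by
    intro y r hr
    rw [Measure.addHaar_ball_of_pos _ y hr, hfrk]
  intro y hy s δ hδ hδ2
  set A := {x | s ≤ dist x y ∧ dist x y < s + δ} with hAdef
  have hAm : MeasurableSet A := by
    have hdm : Measurable fun x : EuclideanSpace ℝ (Fin M) => dist x y :=
      measurable_id.dist measurable_const
    exact (measurableSet_le measurable_const hdm).inter
      (measurableSet_lt hdm measurable_const)
  have h1 := hμle A hAm
  rcases le_or_gt s 0 with hs0 | hs0
  · -- s ≤ 0 : A ⊆ ball y δ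
    have hsub : A ∩ X ⊆ Metric.ball y δ := by
      intro x hx
      have := hx.1.2
      rw [Metric.mem_ball]
      linarith
    have hv : volume (A ∩ X) ≤ ENNReal.ofReal (δ ^ M) * ν :=
      (measure_mono hsub).trans_eq (hball y δ hδ)
    have hpow : δ ^ M ≤ (D + 2) ^ (M - 1) * δ := by
      have hMeq : M - 1 + 1 = M := Nat.succ_pred_eq_of_pos hM
      calc δ ^ M = δ ^ (M - 1) * δ := by rw [← pow_succ, hMeq]
        _ ≤ (D + 2) ^ (M - 1) * δ := by
            apply mul_le_mul_of_nonneg_right _ hδ.le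
            exact pow_le_pow_left₀ hδ.le (by linarith) _
    calc μ A ≤ ENNReal.ofReal G * (ENNReal.ofReal (δ ^ M) * ν) :=
          h1.trans (mul_le_mul_right hv _)
      _ = ENNReal.ofReal (G * δ ^ M * K) := by
          rw [← ENNReal.ofReal_toReal hνfin, ← hKdef,
            ← ENNReal.ofReal_mul (by positivity : (0:ℝ) ≤ δ ^ M),
            ← ENNReal.ofReal_mul hG]
          congr 1; ring
      _ ≤ ENNReal.ofReal (L * δ) := by
          apply ENNReal.ofReal_le_ofReal
          rw [hLdef]
          have h2 : G * δ ^ M * K ≤ G * ((D+2)^(M-1) * δ) * K := by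
            apply mul_le_mul_of_nonneg_right _ hK
            exact mul_le_mul_of_nonneg_left hpow hG
          calc G * δ ^ M * K ≤ G * ((D+2)^(M-1) * δ) * K := h2
            _ = G * K * 1 * (D+2)^(M-1) * δ := by ring
            _ ≤ G * K * M * (D+2)^(M-1) * δ := by
                have h1M : (1:ℝ) ≤ M := by exact_mod_cast hM
                have hp : (0:ℝ) ≤ (D+2)^(M-1) := by positivity
                apply mul_le_mul_of_nonneg_right _ hδ.le
                apply mul_le_mul_of_nonneg_right _ hp
                nlinarith [mul_nonneg hG hK]
  rcases le_or_gt s D with hsD | hsD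
  · -- 0 < s ≤ D
    have hsub : A ∩ X ⊆ Metric.ball y (s + δ) \ Metric.ball y s := by
      intro x hx
      exact ⟨Metric.mem_ball.2 hx.1.2, fun hc => absurd (Metric.mem_ball.1 hc)
        (not_lt.2 hx.1.1)⟩
    have hv : volume (A ∩ X) ≤
        volume (Metric.ball y (s + δ)) - volume (Metric.ball y s) :=
      (measure_mono hsub).trans_eq (measure_diff (Metric.ball_subset_ball (by linarith))
        measurableSet_ball.nullMeasurableSet measure_ball_lt_top.ne)
    have hv2 : volume (Metric.ball y (s + δ)) - volume (Metric.ball y s)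
        ≤ ENNReal.ofReal ((s + δ) ^ M - s ^ M) * ν := by
      rw [hball y _ (by linarith), hball y s hs0]
      rw [tsub_le_iff_right, ← add_mul, ← ENNReal.ofReal_add (by
        have := pow_le_pow_left₀ hs0.le (le_add_of_nonneg_right hδ.le) M
        linarith) (by positivity)]
      apply mul_le_mul_left
      apply ENNReal.ofReal_le_ofReal
      linarith
    have hpow : (s + δ) ^ M - s ^ M ≤ M * (D + 2) ^ (M - 1) * δ := by
      have hMeq : M - 1 + 1 = M := Nat.succ_pred_eq_of_pos hM
      have := pow_sub_pow_le_aux hs0.le (le_add_of_nonneg_right hδ.le) (M - 1)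
      rw [hMeq] at this
      have h3 : ((M - 1 : ℕ) : ℝ) + 1 = (M : ℝ) := by
        rw [← hMeq]; push_cast; ring
      rw [h3] at this
      have h4 : (s + δ) ^ (M-1) ≤ (D + 2) ^ (M-1) :=
        pow_le_pow_left₀ (by linarith) (by linarith) _
      have h5 : (s + δ) - s = δ := by ring
      rw [h5] at this
      calc (s + δ) ^ M - s ^ M ≤ (M : ℝ) * (s + δ) ^ (M-1) * δ := this
        _ ≤ (M : ℝ) * (D + 2) ^ (M-1) * δ := by
            apply mul_le_mul_of_nonneg_right _ hδ.le
            apply mul_le_mul_of_nonneg_left h4 (by positivity)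
    calc μ A ≤ ENNReal.ofReal G * (ENNReal.ofReal ((s+δ)^M - s^M) * ν) :=
          h1.trans (mul_le_mul_right (hv.trans hv2) _)
      _ = ENNReal.ofReal (G * ((s+δ)^M - s^M) * K) := by
          rcases le_or_gt ((s+δ)^M - s^M) 0 with h | h
          · rw [ENNReal.ofReal_eq_zero.2 h, zero_mul, mul_zero, eq_comm,
              ENNReal.ofReal_eq_zero]
            have heq : G * ((s+δ)^M - s^M) * K = (G*K) * ((s+δ)^M - s^M) := by ring
            rw [heq]
            exact mul_nonpos_of_nonneg_of_nonpos (mul_nonneg hG hK) h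
          · rw [← ENNReal.ofReal_toReal hνfin, ← hKdef,
              ← ENNReal.ofReal_mul h.le, ← ENNReal.ofReal_mul hG]
            congr 1; ring
      _ ≤ ENNReal.ofReal (L * δ) := by
          apply ENNReal.ofReal_le_ofReal
          rw [hLdef]
          calc G * ((s+δ)^M - s^M) * K ≤ G * (M * (D+2)^(M-1) * δ) * K := by
                apply mul_le_mul_of_nonneg_right _ hK
                exact mul_le_mul_of_nonneg_left hpow hG
            _ = G * K * M * (D+2)^(M-1) * δ := by ring
  · -- D < s : annulus misses X
    have hsub : A ∩ X = ∅ := by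
      ext x
      simp only [mem_inter_iff, mem_empty_iff_false, iff_false, not_and]
      intro hxA hxX
      exact absurd (hdistD x hxX y hy) (not_le.2 (lt_of_lt_of_le hsD hxA.1))
    calc μ A ≤ ENNReal.ofReal G * volume (A ∩ X) := h1
      _ = 0 := by rw [hsub]; simp
      _ ≤ ENNReal.ofReal (L * δ) := zero_le

private lemma cdf_aux_lip (M : ℕ) (L : ℝ)
    (X : Set (EuclideanSpace ℝ (Fin M)))
    (μ : Measure (EuclideanSpace ℝ (Fin M))) [IsProbabilityMeasure μ]
    (hXae : ∀ᵐ x ∂μ, x ∈ X)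
    (hann : ∀ y ∈ X, ∀ s δ : ℝ, 0 < δ → δ ≤ 2 →
      μ {x | s ≤ dist x y ∧ dist x y < s + δ} ≤ ENNReal.ofReal (L * δ)) :
    ∀ s δ : ℝ, 0 < δ → δ ≤ 2 →
      (∫⁻ x, μ (Metric.ball x (s + δ)) ∂μ) ≤
        (∫⁻ x, μ (Metric.ball x s) ∂μ) + ENNReal.ofReal (L * δ) := by
  intro s δ hδ hδ2
  have key : ∀ᵐ x ∂μ, μ (Metric.ball x (s + δ)) ≤
      μ (Metric.ball x s) + ENNReal.ofReal (L * δ) := by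
    filter_upwards [hXae] with x hx
    have hsub : Metric.ball x (s + δ) ⊆
        Metric.ball x s ∪ {y | s ≤ dist y x ∧ dist y x < s + δ} := by
      intro y hy
      rcases lt_or_ge (dist y x) s with h | h
      · exact Or.inl (Metric.mem_ball.2 h)
      · exact Or.inr ⟨h, Metric.mem_ball.1 hy⟩
    calc μ (Metric.ball x (s + δ)) ≤
        μ (Metric.ball x s) + μ {y | s ≤ dist y x ∧ dist y x < s + δ} :=
          (measure_mono hsub).trans (measure_union_le _ _)
      _ ≤ μ (Metric.ball x s) + ENNReal.ofReal (L * δ) :=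
          add_le_add_right (hann x hx s δ hδ hδ2) _
  calc ∫⁻ x, μ (Metric.ball x (s + δ)) ∂μ
      ≤ ∫⁻ x, (μ (Metric.ball x s) + ENNReal.ofReal (L * δ)) ∂μ :=
        lintegral_mono_ae key
    _ = ∫⁻ x, μ (Metric.ball x s) ∂μ + ENNReal.ofReal (L * δ) := by
        rw [lintegral_add_right _ measurable_const, lintegral_const, measure_univ, mul_one]
private lemma cdf_aux_core (M : ℕ) (m : ℕ)
    (X : Set (EuclideanSpace ℝ (Fin M)))
    (f : EuclideanSpace ℝ (Fin M) → EuclideanSpace ℝ (Fin M))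
    (hf : Measurable f) (hfX : MapsTo f X X)
    (μ : Measure (EuclideanSpace ℝ (Fin M))) [IsProbabilityMeasure μ]
    (hXm : MeasurableSet X)
    (hXc0 : μ Xᶜ = 0) (hXae : ∀ᵐ x ∂μ, x ∈ X) (hX1 : μ X = 1)
    (e : ℝ) (he : 0 < e)
    (P : Set (Set (EuclideanSpace ℝ (Fin M))))
    (hPc : P.Countable)
    (hPm : ∀ T ∈ P, MeasurableSet T)
    (hPd : P.Pairwise Disjoint)
    (hPu : ⋃₀ P = X)
    (hPdiam : ∀ T ∈ P, EMetric.diam T < ENNReal.ofReal e)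
    (hPmix : ∀ T ∈ P, ∀ E ⊆ X, MeasurableSet E →
      |(μ E).toReal * (μ T).toReal - (μ (f^[m] ⁻¹' E ∩ T)).toReal| < e * (μ T).toReal)
    (s : ℝ) :
    μ {x | dist x (f^[m] x) < s} ≤
      (∫⁻ x, μ (Metric.ball x (s + 2*e)) ∂μ) + ENNReal.ofReal e ∧
    (∫⁻ x, μ (Metric.ball x (s - 2*e)) ∂μ) ≤
      μ {x | dist x (f^[m] x) < s} + ENNReal.ofReal e := by
  classical
  haveI : Countable P := hPc.to_subtype
  have hPd' : Pairwise (Function.onFun Disjoint fun T : P => (T : Set (EuclideanSpace ℝ (Fin M)))) :=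
    hPd.subtype _ _
  have hUnion : ⋃ T : P, (T : Set (EuclideanSpace ℝ (Fin M))) = X := by
    rw [← Set.sUnion_eq_iUnion, hPu]
  -- each T is nonempty and included in X
  have hTsub : ∀ T ∈ P, T ⊆ X := fun T hT => hPu ▸ subset_sUnion_of_mem hT
  have hTne : ∀ T ∈ P, T.Nonempty := by
    intro T hT
    have h := hPmix T hT ∅ (empty_subset X) MeasurableSet.empty
    simp only [measure_empty, ENNReal.toReal_zero, zero_mul, preimage_empty, empty_inter,
      abs_zero, sub_zero] at h
    have hμT : 0 < (μ T).toReal := by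
      by_contra hc
      push_neg at hc
      have : (μ T).toReal = 0 := le_antisymm hc ENNReal.toReal_nonneg
      rw [this, mul_zero] at h
      exact absurd h (lt_irrefl 0)
    have : μ T ≠ 0 := by
      intro hc; rw [hc] at hμT; simp at hμT
    exact nonempty_of_measure_ne_zero this
  -- anchor points
  have htex : ∀ T : P, ∃ x, x ∈ (T : Set (EuclideanSpace ℝ (Fin M))) := fun T => hTne T T.2
  choose t ht using htex
  -- distance to anchor
  have hdt : ∀ T : P, ∀ x ∈ (T : Set (EuclideanSpace ℝ (Fin M))), dist x (t T) < e := by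
    intro T x hx
    have h1 : edist x (t T) ≤ EMetric.diam (T : Set (EuclideanSpace ℝ (Fin M))) :=
      EMetric.edist_le_diam_of_mem hx (ht T)
    have h2 : edist x (t T) < ENNReal.ofReal e := h1.trans_lt (hPdiam T T.2)
    exact (edist_lt_ofReal).1 h2
  set A := {x | dist x (f^[m] x) < s} with hAdef
  have hAm : MeasurableSet A :=
    measurableSet_lt (measurable_id.dist (hf.iterate m)) measurable_const
  have hμfin : ∀ S : Set (EuclideanSpace ℝ (Fin M)), μ S ≠ ⊤ := fun S => measure_ne_top μ S
  -- decomposition of μ A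
  have hAX : μ A = ∑' T : P, μ (A ∩ T) := by
    have h1 : μ A = μ (A ∩ X) := by
      rw [← Measure.restrict_apply hAm, Measure.restrict_eq_self_of_ae_mem hXae]
    rw [h1, ← hUnion, inter_iUnion, measure_iUnion
      (hPd'.mono fun T₁ T₂ h => h.mono inter_subset_right inter_subset_right)
      (fun T : P => hAm.inter (hPm T.1 T.2))]
  have hsum1 : ∑' T : P, μ (T : Set (EuclideanSpace ℝ (Fin M))) = 1 := by
    rw [← measure_iUnion hPd' (fun T : P => hPm T.1 T.2), hUnion, hX1]
  have hofReal : ∀ a b c : ENNReal, a ≠ ⊤ → b ≠ ⊤ → c ≠ ⊤ →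
      a.toReal ≤ b.toReal + c.toReal → a ≤ b + c := by
    intro a b c ha hb hc h
    rw [← ENNReal.ofReal_toReal ha]
    calc ENNReal.ofReal a.toReal ≤ ENNReal.ofReal (b.toReal + c.toReal) :=
          ENNReal.ofReal_le_ofReal h
      _ = ENNReal.ofReal b.toReal + ENNReal.ofReal c.toReal :=
          ENNReal.ofReal_add ENNReal.toReal_nonneg ENNReal.toReal_nonneg
      _ = b + c := by rw [ENNReal.ofReal_toReal hb, ENNReal.ofReal_toReal hc]
  constructor
  · -- upper bound
    have key : ∀ T : P, μ (A ∩ T) ≤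
        (∫⁻ y in (T : Set (EuclideanSpace ℝ (Fin M))), μ (Metric.ball y (s + 2*e)) ∂μ) +
          ENNReal.ofReal e * μ (T : Set (EuclideanSpace ℝ (Fin M))) := by
      intro T
      set E := Metric.ball (t T) (s + e) ∩ X with hEdef
      have hEm : MeasurableSet E := measurableSet_ball.inter hXm
      have hEX : E ⊆ X := inter_subset_right
      have hsub : A ∩ (T : Set (EuclideanSpace ℝ (Fin M))) ⊆ f^[m] ⁻¹' E ∩ (T : Set (EuclideanSpace ℝ (Fin M))) := by
        intro x hx
        have hxT : x ∈ (T : Set (EuclideanSpace ℝ (Fin M))) := hx.2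
        have hxX : x ∈ X := hTsub T T.2 hxT
        have hfx : f^[m] x ∈ X := hfX.iterate m hxX
        have h1 : dist x (t T) < e := hdt T x hxT
        have h2 : dist x (f^[m] x) < s := hx.1
        have h3 : dist (f^[m] x) (t T) < s + e := by
          calc dist (f^[m] x) (t T) ≤ dist (f^[m] x) x + dist x (t T) := dist_triangle _ _ _
            _ < s + e := by rw [dist_comm (f^[m] x) x]; linarith
        exact ⟨⟨Metric.mem_ball.2 h3, hfx⟩, hxT⟩
      have hmix := hPmix T T.2 E hEX hEm
      have hmix' : (μ (f^[m] ⁻¹' E ∩ T)).toReal ≤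
          (μ E).toReal * (μ (T : Set (EuclideanSpace ℝ (Fin M)))).toReal + e * (μ (T : Set (EuclideanSpace ℝ (Fin M)))).toReal := by
        have := abs_lt.1 hmix
        linarith [this.1]
      have h4 : μ (A ∩ T) ≤ μ E * μ (T : Set (EuclideanSpace ℝ (Fin M))) + ENNReal.ofReal e * μ (T : Set (EuclideanSpace ℝ (Fin M))) := by
        refine (measure_mono hsub).trans ?_
        apply hofReal _ _ _ (hμfin _) (by exact ENNReal.mul_ne_top (hμfin _) (hμfin _))
          (by exact ENNReal.mul_ne_top ENNReal.ofReal_ne_top (hμfin _))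
        rw [ENNReal.toReal_mul, ENNReal.toReal_mul, ENNReal.toReal_ofReal he.le]
        exact hmix'
      refine h4.trans (add_le_add_left ?_ _)
      -- μ E * μ T ≤ ∫_T ball (s+2e)
      have h5 : ∀ y ∈ (T : Set (EuclideanSpace ℝ (Fin M))), μ E ≤ μ (Metric.ball y (s + 2*e)) := by
        intro y hy
        apply measure_mono
        intro z hz
        have h6 : dist z (t T) < s + e := Metric.mem_ball.1 hz.1
        have h7 : dist (t T) y < e := by
          rw [dist_comm]; exact hdt T y hy
        rw [Metric.mem_ball]
        calc dist z y ≤ dist z (t T) + dist (t T) y := dist_triangle _ _ _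
          _ < s + 2*e := by linarith
      calc μ E * μ (T : Set (EuclideanSpace ℝ (Fin M))) = ∫⁻ _y in (T : Set (EuclideanSpace ℝ (Fin M))), μ E ∂μ :=
            (setLIntegral_const _ _).symm
        _ ≤ ∫⁻ y in (T : Set (EuclideanSpace ℝ (Fin M))), μ (Metric.ball y (s + 2*e)) ∂μ := by
            apply lintegral_mono_ae
            rw [ae_restrict_iff' (hPm T T.2)]
            exact ae_of_all _ h5
    calc μ A = ∑' T : P, μ (A ∩ T) := hAX
      _ ≤ ∑' T : P, ((∫⁻ y in (T : Set (EuclideanSpace ℝ (Fin M))), μ (Metric.ball y (s + 2*e)) ∂μ) +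
          ENNReal.ofReal e * μ (T : Set (EuclideanSpace ℝ (Fin M)))) := ENNReal.tsum_le_tsum key
      _ = (∑' T : P, ∫⁻ y in (T : Set (EuclideanSpace ℝ (Fin M))), μ (Metric.ball y (s + 2*e)) ∂μ) +
          ∑' T : P, ENNReal.ofReal e * μ (T : Set (EuclideanSpace ℝ (Fin M))) := ENNReal.tsum_add
      _ ≤ (∫⁻ x, μ (Metric.ball x (s + 2*e)) ∂μ) + ENNReal.ofReal e := by
          apply add_le_add
          · rw [← lintegral_iUnion (fun T : P => hPm T.1 T.2) hPd']
            exact lintegral_mono' Measure.restrict_le_self le_rfl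
          · rw [ENNReal.tsum_mul_left, hsum1, mul_one]
  · -- lower bound
    have key : ∀ T : P, (∫⁻ y in (T : Set (EuclideanSpace ℝ (Fin M))), μ (Metric.ball y (s - 2*e)) ∂μ) ≤
        μ (A ∩ T) + ENNReal.ofReal e * μ (T : Set (EuclideanSpace ℝ (Fin M))) := by
      intro T
      set E := Metric.ball (t T) (s - e) ∩ X with hEdef
      have hEm : MeasurableSet E := measurableSet_ball.inter hXm
      have hEX : E ⊆ X := inter_subset_right
      -- ∫_T ball(s-2e) ≤ μ E * μ T
      have h5 : ∀ y ∈ (T : Set (EuclideanSpace ℝ (Fin M))), μ (Metric.ball y (s - 2*e)) ≤ μ E := by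
        intro y hy
        have hsub2 : Metric.ball y (s - 2*e) ⊆ E ∪ Xᶜ := by
          intro z hz
          rcases em (z ∈ X) with hzX | hzX
          · left
            refine ⟨Metric.mem_ball.2 ?_, hzX⟩
            have h6 : dist z y < s - 2*e := Metric.mem_ball.1 hz
            have h7 : dist y (t T) < e := hdt T y hy
            calc dist z (t T) ≤ dist z y + dist y (t T) := dist_triangle _ _ _
              _ < s - e := by linarith
          · right; exact hzX
        calc μ (Metric.ball y (s - 2*e)) ≤ μ (E ∪ Xᶜ) := measure_mono hsub2
          _ ≤ μ E + μ Xᶜ := measure_union_le _ _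
          _ = μ E := by rw [hXc0, add_zero]
      have h8 : (∫⁻ y in (T : Set (EuclideanSpace ℝ (Fin M))), μ (Metric.ball y (s - 2*e)) ∂μ) ≤
          μ E * μ (T : Set (EuclideanSpace ℝ (Fin M))) := by
        calc (∫⁻ y in (T : Set (EuclideanSpace ℝ (Fin M))), μ (Metric.ball y (s - 2*e)) ∂μ) ≤
            ∫⁻ _y in (T : Set (EuclideanSpace ℝ (Fin M))), μ E ∂μ := by
              apply lintegral_mono_ae
              rw [ae_restrict_iff' (hPm T T.2)]
              exact ae_of_all _ h5
          _ = μ E * μ (T : Set (EuclideanSpace ℝ (Fin M))) := setLIntegral_const _ _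
      refine h8.trans ?_
      -- mixing
      have hmix := hPmix T T.2 E hEX hEm
      have hmix' : (μ E).toReal * (μ (T : Set (EuclideanSpace ℝ (Fin M)))).toReal ≤
          (μ (f^[m] ⁻¹' E ∩ T)).toReal + e * (μ (T : Set (EuclideanSpace ℝ (Fin M)))).toReal := by
        have := abs_lt.1 hmix
        linarith [this.2]
      have h9 : μ E * μ (T : Set (EuclideanSpace ℝ (Fin M))) ≤ μ (f^[m] ⁻¹' E ∩ T) +
          ENNReal.ofReal e * μ (T : Set (EuclideanSpace ℝ (Fin M))) := by
        apply hofReal _ _ _ (by exact ENNReal.mul_ne_top (hμfin _) (hμfin _)) (hμfin _)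
          (by exact ENNReal.mul_ne_top ENNReal.ofReal_ne_top (hμfin _))
        rw [ENNReal.toReal_mul, ENNReal.toReal_mul, ENNReal.toReal_ofReal he.le]
        exact hmix'
      refine h9.trans (add_le_add_left ?_ _)
      -- preimage ⊆ A
      apply measure_mono
      intro x hx
      have hxT : x ∈ (T : Set (EuclideanSpace ℝ (Fin M))) := hx.2
      have hfx : f^[m] x ∈ E := hx.1
      have h1 : dist x (t T) < e := hdt T x hxT
      have h2 : dist (f^[m] x) (t T) < s - e := Metric.mem_ball.1 hfx.1
      refine ⟨?_, hxT⟩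
      show dist x (f^[m] x) < s
      calc dist x (f^[m] x) ≤ dist x (t T) + dist (t T) (f^[m] x) := dist_triangle _ _ _
        _ < s := by rw [dist_comm (t T) (f^[m] x)]; linarith
    calc (∫⁻ x, μ (Metric.ball x (s - 2*e)) ∂μ)
        = ∫⁻ x in ⋃ T : P, (T : Set (EuclideanSpace ℝ (Fin M))), μ (Metric.ball x (s - 2*e)) ∂μ := by
          rw [hUnion, Measure.restrict_eq_self_of_ae_mem hXae]
      _ = ∑' T : P, ∫⁻ y in (T : Set (EuclideanSpace ℝ (Fin M))), μ (Metric.ball y (s - 2*e)) ∂μ :=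
          lintegral_iUnion (fun T : P => hPm T.1 T.2) hPd' _
      _ ≤ ∑' T : P, (μ (A ∩ T) + ENNReal.ofReal e * μ (T : Set (EuclideanSpace ℝ (Fin M)))) :=
          ENNReal.tsum_le_tsum key
      _ = (∑' T : P, μ (A ∩ T)) + ∑' T : P, ENNReal.ofReal e * μ (T : Set (EuclideanSpace ℝ (Fin M))) :=
          ENNReal.tsum_add
      _ = μ A + ENNReal.ofReal e := by
          rw [← hAX, ENNReal.tsum_mul_left, hsum1, mul_one]


/-- Let `X ⊂ ℝ^M` be compact and `f : X → X` Borel measurable with invariant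
Borel probability measure `μ` whose Radon–Nikodym derivative with respect to Lebesgue measure
is continuous. Let `(ε_m)` be positive numbers converging to zero and suppose there are
countable measurable partitions `𝒯_m` of `X` whose elements have diameter less than `ε_m` and
such that `|μ(E)·μ(T) − μ(f^{−m}(E) ∩ T)| < ε_m·μ(T)` for every measurable `E ⊆ X` and every
`T ∈ 𝒯_m`. Then there is `C > 0` with `sup_s |F_m(s) − F(s)| < C·ε_m` for all `m ≥ 1`, where
`F_m(s) = μ{x : d(x, f^m(x)) < s}` and `F(s) = (μ×μ){(x,y) : d(x,y) < s}`. -/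
theorem cdf_convergence_rate (M : ℕ)
    (X : Set (EuclideanSpace ℝ (Fin M))) (hX : IsCompact X)
    (f : EuclideanSpace ℝ (Fin M) → EuclideanSpace ℝ (Fin M))
    (hf : Measurable f) (hfX : MapsTo f X X)
    (μ : Measure (EuclideanSpace ℝ (Fin M))) [IsProbabilityMeasure μ]
    (hinv : ∀ E : Set (EuclideanSpace ℝ (Fin M)), MeasurableSet E → μ (f ⁻¹' E) = μ E)
    (g : EuclideanSpace ℝ (Fin M) → ℝ) (hg : ContinuousOn g X)
    (hμ : μ = (volume.restrict X).withDensity (fun x => ENNReal.ofReal (g x)))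
    (ε : ℕ → ℝ) (hεpos : ∀ m, 1 ≤ m → 0 < ε m) (hεlim : Tendsto ε atTop (nhds 0))
    (𝒯 : ℕ → Set (Set (EuclideanSpace ℝ (Fin M))))
    (hcount : ∀ m, 1 ≤ m → (𝒯 m).Countable)
    (hmeas : ∀ m, 1 ≤ m → ∀ T ∈ 𝒯 m, MeasurableSet T)
    (hdisj : ∀ m, 1 ≤ m → (𝒯 m).Pairwise Disjoint)
    (hcover : ∀ m, 1 ≤ m → ⋃₀ 𝒯 m = X)
    (hdiam : ∀ m, 1 ≤ m → ∀ T ∈ 𝒯 m, EMetric.diam T < ENNReal.ofReal (ε m))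
    (hmix : ∀ m, 1 ≤ m → ∀ T ∈ 𝒯 m, ∀ E ⊆ X, MeasurableSet E →
      |(μ E).toReal * (μ T).toReal - (μ (f^[m] ⁻¹' E ∩ T)).toReal| < ε m * (μ T).toReal) :
    ∃ C > 0, ∀ m, 1 ≤ m → ∀ s : ℝ,
      |(μ {x | dist x (f^[m] x) < s}).toReal -
          ((μ.prod μ) {p | dist p.1 p.2 < s}).toReal| < C * ε m := by
  classical
  rcases Nat.eq_zero_or_pos M with hM0 | hM
  · -- dimension 0 : the space is a single point
    subst hM0
    haveI : Subsingleton (EuclideanSpace ℝ (Fin 0)) :=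
      ⟨fun a b => by ext i; exact i.elim0⟩
    refine ⟨1, one_pos, fun m hm s => ?_⟩
    have hd : ∀ a b : EuclideanSpace ℝ (Fin 0), dist a b = 0 := by
      intro a b; rw [Subsingleton.elim a b, dist_self]
    have h1 : {x | dist x (f^[m] x) < s} = {_x : EuclideanSpace ℝ (Fin 0) | 0 < s} := by
      ext x; simp [hd]
    have h2 : {p : EuclideanSpace ℝ (Fin 0) × EuclideanSpace ℝ (Fin 0) | dist p.1 p.2 < s}
        = {_p : EuclideanSpace ℝ (Fin 0) × EuclideanSpace ℝ (Fin 0) | 0 < s} := by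
      ext p; simp [hd]
    rw [h1, h2]
    rcases lt_or_ge 0 s with hs | hs
    · have e1 : {_x : EuclideanSpace ℝ (Fin 0) | 0 < s} = univ := by
        ext x; simp [hs]
      have e2 : {_p : EuclideanSpace ℝ (Fin 0) × EuclideanSpace ℝ (Fin 0) | 0 < s} = univ := by
        ext p; simp [hs]
      rw [e1, e2, measure_univ, measure_univ]
      simpa using hεpos m hm
    · have e1 : {_x : EuclideanSpace ℝ (Fin 0) | 0 < s} = ∅ := by
        ext x; simp [not_lt.2 hs]
      have e2 : {_p : EuclideanSpace ℝ (Fin 0) × EuclideanSpace ℝ (Fin 0) | 0 < s} = ∅ := by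
        ext p; simp [not_lt.2 hs]
      rw [e1, e2, measure_empty, measure_empty]
      simpa using hεpos m hm
  -- main case M ≥ 1
  have hXm : MeasurableSet X := hX.isClosed.measurableSet
  have hXc0 : μ Xᶜ = 0 := by
    rw [hμ, withDensity_apply _ hXm.compl, Measure.restrict_restrict hXm.compl,
      compl_inter_self, Measure.restrict_empty, lintegral_zero_measure]
  have hXae : ∀ᵐ x ∂μ, x ∈ X := by
    rw [ae_iff]
    exact hXc0
  have hX1 : μ X = 1 := by
    have h := measure_add_measure_compl (μ := μ) hXm
    rw [hXc0, add_zero, measure_univ] at h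
    exact h
  have hXne : X.Nonempty := by
    rcases X.eq_empty_or_nonempty with h | h
    · exfalso; rw [h, measure_empty] at hX1; simp at hX1
    · exact h
  obtain ⟨G, hgG⟩ := hX.exists_bound_of_continuousOn hg
  have hG : 0 ≤ G := le_trans (norm_nonneg _) (hgG _ hXne.choose_spec)
  have hμle : ∀ S : Set (EuclideanSpace ℝ (Fin M)), MeasurableSet S →
      μ S ≤ ENNReal.ofReal G * volume (S ∩ X) := by
    intro S hS
    rw [hμ, withDensity_apply _ hS, Measure.restrict_restrict hS]
    calc ∫⁻ x in S ∩ X, ENNReal.ofReal (g x) ∂volume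
        ≤ ∫⁻ _x in S ∩ X, ENNReal.ofReal G ∂volume := by
          apply lintegral_mono_ae
          rw [ae_restrict_iff' (hS.inter hXm)]
          exact ae_of_all _ fun x hx => ENNReal.ofReal_le_ofReal
            ((le_abs_self _).trans (hgG x hx.2))
      _ = ENNReal.ofReal G * volume (S ∩ X) := setLIntegral_const _ _
  obtain ⟨D, hDdef⟩ : ∃ D : ℝ, D = Metric.diam X := ⟨_, rfl⟩
  have hD : 0 ≤ D := hDdef ▸ Metric.diam_nonneg
  have hdistD : ∀ x ∈ X, ∀ y ∈ X, dist x y ≤ D :=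
    fun x hx y hy => hDdef ▸ Metric.dist_le_diam_of_mem hX.isBounded hx hy
  obtain ⟨K, hKdef⟩ : ∃ K : ℝ,
      K = (volume (Metric.ball (0 : EuclideanSpace ℝ (Fin M)) 1)).toReal := ⟨_, rfl⟩
  obtain ⟨L, hLdef⟩ : ∃ L : ℝ, L = G * K * M * (D + 2) ^ (M - 1) := ⟨_, rfl⟩
  have hK : 0 ≤ K := hKdef ▸ ENNReal.toReal_nonneg
  have hL : 0 ≤ L := by rw [hLdef]; positivity
  have hann := cdf_aux_ann M hM X μ G D L hG hD (by rw [hLdef, hKdef]) hdistD hμle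
  have hLip := cdf_aux_lip M L X μ hXae hann
  have hsetm : ∀ t : ℝ, MeasurableSet {p : EuclideanSpace ℝ (Fin M) ×
      EuclideanSpace ℝ (Fin M) | dist p.1 p.2 < t} := by
    intro t
    exact (isOpen_lt (continuous_fst.dist continuous_snd) continuous_const).measurableSet
  have hFe : ∀ t : ℝ, (μ.prod μ) {p | dist p.1 p.2 < t}
      = ∫⁻ x, μ (Metric.ball x t) ∂μ := by
    intro t
    rw [Measure.prod_apply (hsetm t)]
    apply lintegral_congr
    intro x
    congr 1
    ext y
    simp [Metric.mem_ball, dist_comm]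
  refine ⟨2 * L + 2, by linarith, fun m hm s => ?_⟩
  have he : 0 < ε m := hεpos m hm
  have hAfin : μ {x | dist x (f^[m] x) < s} ≠ ⊤ := measure_ne_top _ _
  have hIfin : (∫⁻ x, μ (Metric.ball x s) ∂μ) ≠ ⊤ := by
    rw [← hFe s]; exact measure_ne_top _ _
  have ha0 : 0 ≤ (μ {x | dist x (f^[m] x) < s}).toReal := ENNReal.toReal_nonneg
  have hb0 : 0 ≤ ((μ.prod μ) {p | dist p.1 p.2 < s}).toReal := ENNReal.toReal_nonneg
  have ha1 : (μ {x | dist x (f^[m] x) < s}).toReal ≤ 1 := by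
    rw [← ENNReal.toReal_one]
    exact ENNReal.toReal_mono ENNReal.one_ne_top prob_le_one
  have hb1 : ((μ.prod μ) {p | dist p.1 p.2 < s}).toReal ≤ 1 := by
    rw [← ENNReal.toReal_one]
    exact ENNReal.toReal_mono ENNReal.one_ne_top prob_le_one
  rcases lt_or_ge (ε m) 1 with he1 | he1
  · -- small ε : use the partition estimates and Lipschitz bound
    obtain ⟨hup, hlow⟩ := cdf_aux_core M m X f hf hfX μ hXm hXc0 hXae hX1 (ε m) he
      (𝒯 m) (hcount m hm) (hmeas m hm) (hdisj m hm) (hcover m hm) (hdiam m hm)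
      (hmix m hm) s
    have l1 := hLip s (2 * ε m) (by linarith) (by linarith)
    have l2 := hLip (s - 2 * ε m) (2 * ε m) (by linarith) (by linarith)
    rw [show s - 2 * ε m + 2 * ε m = s by ring] at l2
    have up2 : μ {x | dist x (f^[m] x) < s} ≤
        (∫⁻ x, μ (Metric.ball x s) ∂μ) + ENNReal.ofReal (L * (2 * ε m))
          + ENNReal.ofReal (ε m) :=
      hup.trans (add_le_add_left l1 _)
    have low2 : (∫⁻ x, μ (Metric.ball x s) ∂μ) ≤
        μ {x | dist x (f^[m] x) < s} + ENNReal.ofReal (ε m)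
          + ENNReal.ofReal (L * (2 * ε m)) :=
      l2.trans (add_le_add_left hlow _)
    have hLε : 0 ≤ L * (2 * ε m) := mul_nonneg hL (by linarith)
    have r1 : (μ {x | dist x (f^[m] x) < s}).toReal ≤
        (∫⁻ x, μ (Metric.ball x s) ∂μ).toReal + L * (2 * ε m) + ε m := by
      have h := ENNReal.toReal_mono (by
        exact ENNReal.add_ne_top.2 ⟨ENNReal.add_ne_top.2 ⟨hIfin, ENNReal.ofReal_ne_top⟩,
          ENNReal.ofReal_ne_top⟩) up2
      rwa [ENNReal.toReal_add (ENNReal.add_ne_top.2 ⟨hIfin, ENNReal.ofReal_ne_top⟩)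
        ENNReal.ofReal_ne_top, ENNReal.toReal_add hIfin ENNReal.ofReal_ne_top,
        ENNReal.toReal_ofReal hLε, ENNReal.toReal_ofReal he.le] at h
    have r2 : (∫⁻ x, μ (Metric.ball x s) ∂μ).toReal ≤
        (μ {x | dist x (f^[m] x) < s}).toReal + ε m + L * (2 * ε m) := by
      have h := ENNReal.toReal_mono (by
        exact ENNReal.add_ne_top.2 ⟨ENNReal.add_ne_top.2 ⟨hAfin, ENNReal.ofReal_ne_top⟩,
          ENNReal.ofReal_ne_top⟩) low2
      rwa [ENNReal.toReal_add (ENNReal.add_ne_top.2 ⟨hAfin, ENNReal.ofReal_ne_top⟩)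
        ENNReal.ofReal_ne_top, ENNReal.toReal_add hAfin ENNReal.ofReal_ne_top,
        ENNReal.toReal_ofReal he.le, ENNReal.toReal_ofReal hLε] at h
    rw [hFe s]
    rw [abs_sub_lt_iff]
    have heq : (2 * L + 2) * ε m = L * (2 * ε m) + ε m + ε m := by ring
    constructor <;> [skip; skip] <;> rw [heq] <;> linarith
  · -- large ε : trivial bound
    have habs : |(μ {x | dist x (f^[m] x) < s}).toReal -
        ((μ.prod μ) {p | dist p.1 p.2 < s}).toReal| ≤ 1 :=
      abs_sub_le_iff.2 ⟨by linarith, by linarith⟩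
    have h2 : 2 * ε m ≤ (2 * L + 2) * ε m := by nlinarith
    have h3 : (2:ℝ) ≤ 2 * ε m := by linarith
    linarith
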